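/- In the mean-field setting, assume λ > 0 and p_out ≤ τ ≤ p_in. Let c₀ > 0 and let A be any symmetric real n×n matrix with ‖A − EA‖₂ ≤ c₀·√d. Set A_τ := A − τ·1ₙ1ₙᵀ, α := ‖A_τ‖₂ and L̃ := α·I − A_τ + λ·P_L, and assume L̃ is invertible. Let X := λ·L̃⁻¹·S and X^MF := λ·EL̃⁻¹·S. Then ‖X − X^MF‖₂ ≤ ( 4·c₀·√d / ( (α^MF + λ)·( 1 − √( 1 − 4·(θ+η)·λ·α^MF/(λ + α^MF)² ) ) ) )·‖X‖₂. -/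

import Mathlib

/-!
Write `EA_τ = β 𝟙𝟙ᵀ + γ σ⁰σ⁰ᵀ` with `β = (p_in + p_out)/2 - τ` and `γ = (p_in - p_out)/2`.
As `𝟙 ⊥ σ⁰` and `|β| ≤ γ`, `‖EA_τ‖₂ = nγ = α^MF`, so `|α - α^MF| ≤ ‖A - EA‖₂` and
`‖EL̃ - L̃‖₂ ≤ 2c₀√d`. The mean-field matrix is coercive, `xᵀ EL̃ x ≥ μ ‖x‖²`, where `μ` is the
smaller root of `t² - (α^MF + λ) t + (θ + η) λ α^MF` (twice `μ` is the denominator of the bound):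
bounding `β` by `γ` splits the quadratic form into one term per cluster, and on a cluster the
estimate is a weighted Cauchy–Schwarz inequality between its labelled and unlabelled coordinates.
Finally `EL̃ (X - X^MF) = (EL̃ - L̃) X`, whence `μ ‖X - X^MF‖ ≤ 2c₀√d ‖X‖`.
-/

open Finset Matrix

noncomputable section

/-- The spectral norm (operator 2-norm) of a real square matrix. -/
def specNorm {n : ℕ} (M : Matrix (Fin n) (Fin n) ℝ) : ℝ :=
  ‖Matrix.toEuclideanCLM (𝕜 := ℝ) M‖

/-- The Euclidean norm of a real vector. -/
def euclNorm {n : ℕ} (v : Fin n → ℝ) : ℝ := Real.sqrt (∑ i, v i ^ 2)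

/-- The expected adjacency matrix `EA` of the SSBM. -/
def meanEA (n : ℕ) (pin pout : ℝ) (σ0 : Fin n → ℝ) : Matrix (Fin n) (Fin n) ℝ :=
  Matrix.of fun i j => if σ0 i = σ0 j then pin else pout

/-- The diagonal 0-1 matrix `P_L` with `(P_L)_{ii} = 1` iff `S_i ≠ 0`. -/
def labelProj (n : ℕ) (S : Fin n → ℝ) : Matrix (Fin n) (Fin n) ℝ :=
  Matrix.diagonal fun i => if S i = 0 then 0 else 1

/-- The mean-field matrix `EL̃ = α^MF·I − EA_τ + λ·P_L`. -/
def meanLtilde (n : ℕ) (pin pout τ lam : ℝ) (σ0 S : Fin n → ℝ) :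
    Matrix (Fin n) (Fin n) ℝ :=
  ((n : ℝ) * (pin - pout) / 2) • (1 : Matrix (Fin n) (Fin n) ℝ)
    - Matrix.of (fun i j => meanEA n pin pout σ0 i j - τ)
    + lam • labelProj n S

/-- The empirical matrix `L̃ = α·I − A_τ + λ·P_L`, with `A_τ = A − τ·1ₙ1ₙᵀ` and
`α = ‖A_τ‖₂`. -/
def empLtilde (n : ℕ) (τ lam : ℝ) (A : Matrix (Fin n) (Fin n) ℝ) (S : Fin n → ℝ) :
    Matrix (Fin n) (Fin n) ℝ :=
  specNorm (Matrix.of fun i j => A i j - τ) • (1 : Matrix (Fin n) (Fin n) ℝ)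
    - Matrix.of (fun i j => A i j - τ)
    + lam • labelProj n S

lemma euclNorm_eq_norm_toLp {n : ℕ} (v : Fin n → ℝ) :
    euclNorm v = ‖WithLp.toLp 2 v‖ := by
  simp [euclNorm, EuclideanSpace.norm_eq, sq_abs]

lemma euclNorm_nonneg {n : ℕ} (v : Fin n → ℝ) : 0 ≤ euclNorm v := Real.sqrt_nonneg _

lemma euclNorm_sq {n : ℕ} (v : Fin n → ℝ) : euclNorm v ^ 2 = ∑ i, v i ^ 2 :=
  Real.sq_sqrt (by positivity)

lemma euclNorm_smul {n : ℕ} (c : ℝ) (v : Fin n → ℝ) : euclNorm (c • v) = |c| * euclNorm v := by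
  simp only [euclNorm_eq_norm_toLp, WithLp.toLp_smul, norm_smul, Real.norm_eq_abs]

lemma dotProduct_le_euclNorm_mul {n : ℕ} (v w : Fin n → ℝ) :
    v ⬝ᵥ w ≤ euclNorm v * euclNorm w :=
  Real.sum_mul_le_sqrt_mul_sqrt _ _ _

lemma euclNorm_mulVec_le {n : ℕ} (M : Matrix (Fin n) (Fin n) ℝ) (v : Fin n → ℝ) :
    euclNorm (M *ᵥ v) ≤ specNorm M * euclNorm v := by
  simpa only [specNorm, euclNorm_eq_norm_toLp, toEuclideanCLM_toLp] using
    (toEuclideanCLM (𝕜 := ℝ) M).le_opNorm (WithLp.toLp 2 v)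

lemma specNorm_le_of_euclNorm_mulVec_le {n : ℕ} {M : Matrix (Fin n) (Fin n) ℝ} {c : ℝ}
    (hc : 0 ≤ c) (h : ∀ v, euclNorm (M *ᵥ v) ≤ c * euclNorm v) : specNorm M ≤ c :=
  ContinuousLinearMap.opNorm_le_bound _ hc fun v => by
    simpa only [euclNorm_eq_norm_toLp, ← toEuclideanCLM_toLp, WithLp.toLp_ofLp] using h v.ofLp

lemma specNorm_eq_of_mulVec_eq_smul {n : ℕ} {M : Matrix (Fin n) (Fin n) ℝ} {c : ℝ} (hc : 0 ≤ c)
    (h : ∀ v, euclNorm (M *ᵥ v) ≤ c * euclNorm v) {v : Fin n → ℝ} (hv : v ≠ 0)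
    (hMv : M *ᵥ v = c • v) : specNorm M = c := by
  refine (specNorm_le_of_euclNorm_mulVec_le hc h).antisymm ?_
  have hpos : 0 < euclNorm v := by
    rw [euclNorm_eq_norm_toLp]
    exact norm_pos_iff.mpr fun h0 => hv (by simpa using congrArg WithLp.ofLp h0)
  have := euclNorm_mulVec_le M v
  rw [hMv, euclNorm_smul, abs_of_nonneg hc] at this
  exact le_of_mul_le_mul_right this hpos

lemma specNorm_sub_le_two_mul {n : ℕ} (M N P : Matrix (Fin n) (Fin n) ℝ) :
    specNorm ((specNorm M • 1 - M + P) - (specNorm N • 1 - N + P)) ≤ 2 * specNorm (N - M) := by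
  have hdiff : (specNorm M • 1 - M + P) - (specNorm N • 1 - N + P)
      = (specNorm M - specNorm N) • (1 : Matrix (Fin n) (Fin n) ℝ) + (N - M) := by
    rw [sub_smul]; abel
  have hsmul : specNorm ((specNorm M - specNorm N) • (1 : Matrix (Fin n) (Fin n) ℝ))
      ≤ specNorm (N - M) := by
    refine specNorm_le_of_euclNorm_mulVec_le (norm_nonneg _) fun v => ?_
    have habs : |specNorm N - specNorm M| ≤ specNorm (N - M) := by
      simpa only [specNorm, map_sub] using abs_norm_sub_norm_le (toEuclideanCLM (𝕜 := ℝ) N) _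
    rw [smul_mulVec, one_mulVec, euclNorm_smul, abs_sub_comm]
    exact mul_le_mul_of_nonneg_right habs (euclNorm_nonneg v)
  calc specNorm ((specNorm M • 1 - M + P) - (specNorm N • 1 - N + P))
      ≤ specNorm ((specNorm M - specNorm N) • (1 : Matrix (Fin n) (Fin n) ℝ))
        + specNorm (N - M) := by
        rw [hdiff, specNorm, map_add]; exact norm_add_le _ _
    _ ≤ 2 * specNorm (N - M) := by linarith

section Coercive

variable {n : ℕ} {μ : ℝ} {M : Matrix (Fin n) (Fin n) ℝ}
  (hM : ∀ x, μ * euclNorm x ^ 2 ≤ x ⬝ᵥ (M *ᵥ x))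
include hM

lemma mul_euclNorm_le_euclNorm_mulVec (x : Fin n → ℝ) :
    μ * euclNorm x ≤ euclNorm (M *ᵥ x) := by
  rcases (euclNorm_nonneg x).eq_or_lt with hx | hx
  · rw [← hx, mul_zero]; exact euclNorm_nonneg _
  · refine le_of_mul_le_mul_right ?_ hx
    calc μ * euclNorm x * euclNorm x = μ * euclNorm x ^ 2 := by ring
      _ ≤ x ⬝ᵥ (M *ᵥ x) := hM x
      _ ≤ euclNorm x * euclNorm (M *ᵥ x) := dotProduct_le_euclNorm_mul _ _
      _ = euclNorm (M *ᵥ x) * euclNorm x := mul_comm _ _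

lemma isUnit_det_of_coercive (hμ : 0 < μ) : IsUnit M.det := by
  rw [← isUnit_iff_isUnit_det, ← mulVec_injective_iff_isUnit]
  intro x y hxy
  have hzero : μ * euclNorm (x - y) ≤ 0 := by
    simpa [mulVec_sub, hxy, euclNorm] using mul_euclNorm_le_euclNorm_mulVec hM (x - y)
  have hnorm : ‖WithLp.toLp 2 (x - y)‖ = 0 := by
    rw [← euclNorm_eq_norm_toLp]
    exact le_antisymm (nonpos_of_mul_nonpos_right hzero hμ) (euclNorm_nonneg _)
  simpa [sub_eq_zero] using hnorm

lemma mul_euclNorm_inv_mulVec_sub_le (hμ : 0 < μ) {N : Matrix (Fin n) (Fin n) ℝ}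
    (hN : IsUnit N.det) (b : Fin n → ℝ) :
    μ * euclNorm (N⁻¹ *ᵥ b - M⁻¹ *ᵥ b) ≤ specNorm (M - N) * euclNorm (N⁻¹ *ᵥ b) := by
  have hdiff : M *ᵥ (N⁻¹ *ᵥ b - M⁻¹ *ᵥ b) = (M - N) *ᵥ (N⁻¹ *ᵥ b) := by
    simp only [mulVec_sub, mulVec_mulVec, sub_mul, sub_mulVec, mul_nonsing_inv _ hN,
      mul_nonsing_inv _ (isUnit_det_of_coercive hM hμ), one_mulVec]
  calc μ * euclNorm (N⁻¹ *ᵥ b - M⁻¹ *ᵥ b) ≤ euclNorm (M *ᵥ (N⁻¹ *ᵥ b - M⁻¹ *ᵥ b)) :=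
        mul_euclNorm_le_euclNorm_mulVec hM _
    _ ≤ specNorm (M - N) * euclNorm (N⁻¹ *ᵥ b) := hdiff ▸ euclNorm_mulVec_le _ _

end Coercive

/-- The smaller root of `t² - (α + λ) t + ρ λ α`: the smallest eigenvalue of
`α I + λ P - (α / N) 𝟙𝟙ᵀ` on `N` coordinates, a fraction `ρ` of which are selected by the
diagonal projection `P`. -/
def smallRoot (α lam ρ : ℝ) : ℝ :=
  (α + lam) * (1 - √(1 - 4 * ρ * lam * α / (lam + α) ^ 2)) / 2

section SmallRoot

variable {α lam ρ : ℝ} (hα : 0 < α) (hlam : 0 < lam)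
include hα hlam

lemma smallRoot_sq_sub_add (hρ : ρ ≤ 1) :
    smallRoot α lam ρ ^ 2 - (α + lam) * smallRoot α lam ρ + ρ * lam * α = 0 := by
  have hsum : 0 < lam + α := by linarith
  have hdisc : 0 ≤ 1 - 4 * ρ * lam * α / (lam + α) ^ 2 := by
    rw [sub_nonneg, div_le_one (by positivity)]
    nlinarith [sq_nonneg (lam - α), mul_pos hlam hα]
  have hr : (lam + α) ^ 2 * √(1 - 4 * ρ * lam * α / (lam + α) ^ 2) ^ 2
      = (lam + α) ^ 2 - 4 * ρ * lam * α := by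
    rw [Real.sq_sqrt hdisc]; field_simp
  unfold smallRoot
  linear_combination hr / 4

lemma smallRoot_pos (hρ : 0 < ρ) : 0 < smallRoot α lam ρ := by
  have hr : √(1 - 4 * ρ * lam * α / (lam + α) ^ 2) < 1 := by
    rw [Real.sqrt_lt' one_pos, one_pow, sub_lt_self_iff]
    positivity
  unfold smallRoot
  have : 0 < α + lam := by linarith
  nlinarith

lemma smallRoot_lt (hρ : ρ < 1) : smallRoot α lam ρ < α := by
  have hroot := smallRoot_sq_sub_add hα hlam hρ.le
  have hle : smallRoot α lam ρ ≤ (α + lam) / 2 := by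
    unfold smallRoot
    have := Real.sqrt_nonneg (1 - 4 * ρ * lam * α / (lam + α) ^ 2)
    nlinarith
  -- `t ↦ t² - (α + λ) t + ρλα` is negative at `α`, so `α` lies strictly between its roots.
  by_contra! h
  nlinarith [mul_pos hα hlam]

/-- Cauchy–Schwarz with weights `ρ / (α + λ - μ)` and `(1 - ρ) / (α - μ)`, which sum to `1 / α`
exactly because `μ` is a root of `t² - (α + λ) t + ρ λ α`. -/
lemma mul_sq_add_le_of_smallRoot (hρ₀ : 0 < ρ) (hρ₁ : ρ < 1) {a b w u N : ℝ}
    (ha : a ^ 2 ≤ ρ * N * w) (hb : b ^ 2 ≤ (1 - ρ) * N * u) :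
    α * (a + b) ^ 2 ≤ N * ((α - smallRoot α lam ρ) * (w + u) + lam * w) := by
  set μ := smallRoot α lam ρ
  have hroot := smallRoot_sq_sub_add hα hlam hρ₁.le
  have hq : 0 < α - μ := sub_pos.mpr (smallRoot_lt hα hlam hρ₁)
  have hp : 0 < α + lam - μ := by linarith
  set P := ρ / (α + lam - μ)
  set Q := (1 - ρ) / (α - μ)
  have hP : 0 < P := div_pos hρ₀ hp
  have hQ : 0 < Q := div_pos (sub_pos.mpr hρ₁) hq
  have hPQ : α * (P + Q) = 1 := by
    simp only [P, Q]
    field_simp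
    linear_combination -hroot
  have hCS : (a + b) ^ 2 / (P + Q) ≤ a ^ 2 / P + b ^ 2 / Q := by
    simpa [Fin.sum_univ_two] using
      sq_sum_div_le_sum_sq_div univ ![a, b] (g := ![P, Q]) (by simp [Fin.forall_fin_two, hP, hQ])
  have ha' : a ^ 2 / P ≤ N * w * (α + lam - μ) := by
    rw [div_le_iff₀ hP]
    calc a ^ 2 ≤ ρ * N * w := ha
      _ = N * w * (α + lam - μ) * P := by simp only [P]; field_simp
  have hb' : b ^ 2 / Q ≤ N * u * (α - μ) := by
    rw [div_le_iff₀ hQ]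
    calc b ^ 2 ≤ (1 - ρ) * N * u := hb
      _ = N * u * (α - μ) * Q := by simp only [Q]; field_simp
  calc α * (a + b) ^ 2 = (a + b) ^ 2 / (P + Q) := by
        rw [eq_div_iff (by positivity), mul_assoc, mul_comm _ (P + Q), ← mul_assoc, hPQ, one_mul]
    _ ≤ N * w * (α + lam - μ) + N * u * (α - μ) := by linarith
    _ = N * ((α - μ) * (w + u) + lam * w) := by ring

end SmallRoot

lemma mul_sq_sum_le_of_smallRoot {ι : Type*} (C : Finset ι) (p : ι → Prop) [DecidablePred p]
    {α c lam ρ : ℝ} (hα : 0 < α) (hαC : α = #C * c) (hlam : 0 < lam) (hρ₀ : 0 < ρ) (hρ₁ : ρ < 1)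
    (hC : (#(C.filter p) : ℝ) = ρ * #C) (x : ι → ℝ) :
    c * (∑ i ∈ C, x i) ^ 2
      ≤ (α - smallRoot α lam ρ) * ∑ i ∈ C, x i ^ 2 + lam * ∑ i ∈ C.filter p, x i ^ 2 := by
  have hN : (0 : ℝ) < #C := (Nat.cast_nonneg _).lt_of_ne fun h => by
    rw [← h, zero_mul] at hαC; linarith
  have hCnot : (#(C.filter (¬ p ·)) : ℝ) = (1 - ρ) * #C := by
    rw [sub_mul, one_mul, ← hC, eq_sub_iff_add_eq, ← Nat.cast_add, add_comm,
      card_filter_add_card_filter_not]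
  refine le_of_mul_le_mul_left ?_ hN
  calc #C * (c * (∑ i ∈ C, x i) ^ 2) = α * (∑ i ∈ C, x i) ^ 2 := by rw [hαC]; ring
    _ ≤ _ := by
      rw [← sum_filter_add_sum_filter_not C p, ← sum_filter_add_sum_filter_not C p]
      refine mul_sq_add_le_of_smallRoot hα hlam hρ₀ hρ₁ ?_ ?_
      · exact hC ▸ sq_sum_le_card_mul_sum_sq
      · exact hCnot ▸ sq_sum_le_card_mul_sum_sq

section TwoClusters

variable {ι : Type*} [Fintype ι] {σ : ι → ℝ} (hσ : ∀ i, σ i = 1 ∨ σ i = -1)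
include hσ

lemma sum_eq_sum_filter_add_sum_filter {M : Type*} [AddCommMonoid M] (f : ι → M) :
    ∑ i, f i = ∑ i ∈ univ.filter (σ · = 1), f i + ∑ i ∈ univ.filter (σ · = -1), f i := by
  rw [← sum_filter_add_sum_filter_not univ (σ · = 1)]
  congr 2
  exact filter_congr fun i _ => by rcases hσ i with h | h <;> simp [h] <;> norm_num

lemma dotProduct_eq_sum_filter_sub_sum_filter (x : ι → ℝ) :
    σ ⬝ᵥ x = ∑ i ∈ univ.filter (σ · = 1), x i - ∑ i ∈ univ.filter (σ · = -1), x i := by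
  rw [dotProduct, sum_eq_sum_filter_add_sum_filter hσ, sub_eq_add_neg, ← sum_neg_distrib]
  congr 1 <;> refine sum_congr rfl fun i hi => ?_ <;> simp [(mem_filter.mp hi).2]

lemma sq_sum_add_sq_dotProduct (x : ι → ℝ) :
    (∑ i, x i) ^ 2 + (σ ⬝ᵥ x) ^ 2
      = 2 * ((∑ i ∈ univ.filter (σ · = 1), x i) ^ 2
        + (∑ i ∈ univ.filter (σ · = -1), x i) ^ 2) := by
  rw [sum_eq_sum_filter_add_sum_filter hσ, dotProduct_eq_sum_filter_sub_sum_filter hσ]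
  ring

lemma sum_eq_zero_of_card_filter_eq (hbal : #(univ.filter (σ · = 1)) = #(univ.filter (σ · = -1))) :
    ∑ i, σ i = 0 := by
  have h := dotProduct_eq_sum_filter_sub_sum_filter hσ (fun _ => 1)
  simp only [sum_const, nsmul_eq_mul, mul_one, hbal, sub_self] at h
  simpa [dotProduct] using h

lemma card_filter_add_card_filter :
    #(univ.filter (σ · = 1)) + #(univ.filter (σ · = -1)) = Fintype.card ι := by
  simpa using (sum_eq_sum_filter_add_sum_filter hσ (fun _ => (1 : ℕ))).symm

/-- Bessel's inequality for the orthogonal pair `𝟙, σ`, both of squared norm `card ι`. -/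
lemma sq_sum_add_sq_dotProduct_le
    (hbal : #(univ.filter (σ · = 1)) = #(univ.filter (σ · = -1))) (x : ι → ℝ) :
    (∑ i, x i) ^ 2 + (σ ⬝ᵥ x) ^ 2 ≤ Fintype.card ι * ∑ i, x i ^ 2 := by
  have hcard : (Fintype.card ι : ℝ) = 2 * #(univ.filter (σ · = 1)) := by
    rw [two_mul]; nth_rw 2 [hbal]; exact_mod_cast (card_filter_add_card_filter hσ).symm
  have hC₁ := sq_sum_le_card_mul_sum_sq (s := univ.filter (σ · = 1)) (f := x)
  have hC₂ := sq_sum_le_card_mul_sum_sq (s := univ.filter (σ · = -1)) (f := x)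
  rw [sq_sum_add_sq_dotProduct hσ, hcard, sum_eq_sum_filter_add_sum_filter hσ (x · ^ 2)]
  rw [← hbal] at hC₂
  linarith

lemma sum_sq_eq_card : ∑ i, σ i ^ 2 = Fintype.card ι := by
  simp [fun i => show σ i ^ 2 = 1 by rcases hσ i with h | h <;> simp [h]]

end TwoClusters

section MeanField

variable {n : ℕ} {pin pout τ : ℝ} {σ0 : Fin n → ℝ} (hσ : ∀ i, σ0 i = 1 ∨ σ0 i = -1)
include hσ

lemma meanEA_sub_mulVec (x : Fin n → ℝ) :
    of (fun i j => meanEA n pin pout σ0 i j - τ) *ᵥ x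
      = fun i => ((pin + pout) / 2 - τ) * ∑ j, x j + (pin - pout) / 2 * σ0 i * (σ0 ⬝ᵥ x) := by
  ext i
  have hentry : ∀ j, meanEA n pin pout σ0 i j - τ
      = ((pin + pout) / 2 - τ) + (pin - pout) / 2 * (σ0 i * σ0 j) := fun j => by
    rcases hσ i with hi | hi <;> rcases hσ j with hj | hj <;>
      simp only [meanEA, of_apply, hi, hj] <;> norm_num <;> ring
  simp only [mulVec, dotProduct, of_apply, hentry, add_mul, sum_add_distrib, mul_sum]
  congr 1
  exact sum_congr rfl fun j _ => by ring

lemma dotProduct_meanEA_sub_mulVec (x : Fin n → ℝ) :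
    x ⬝ᵥ (of (fun i j => meanEA n pin pout σ0 i j - τ) *ᵥ x)
      = ((pin + pout) / 2 - τ) * (∑ i, x i) ^ 2 + (pin - pout) / 2 * (σ0 ⬝ᵥ x) ^ 2 := by
  have hterm : ∀ i, x i * (((pin + pout) / 2 - τ) * ∑ j, x j
      + (pin - pout) / 2 * σ0 i * (σ0 ⬝ᵥ x))
      = ((pin + pout) / 2 - τ) * (∑ j, x j) * x i
        + (pin - pout) / 2 * (σ0 ⬝ᵥ x) * (σ0 i * x i) := fun i => by ring
  rw [meanEA_sub_mulVec hσ, dotProduct]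
  simp only [hterm, sum_add_distrib, ← mul_sum]
  rw [← dotProduct]
  ring

lemma euclNorm_meanEA_sub_mulVec_le (hτ₁ : pout ≤ τ) (hτ₂ : τ ≤ pin)
    (hbal : #(univ.filter (σ0 · = 1)) = #(univ.filter (σ0 · = -1))) (x : Fin n → ℝ) :
    euclNorm (of (fun i j => meanEA n pin pout σ0 i j - τ) *ᵥ x)
      ≤ n * ((pin - pout) / 2) * euclNorm x := by
  set β := (pin + pout) / 2 - τ
  set γ := (pin - pout) / 2
  have hα : 0 ≤ n * γ := mul_nonneg (Nat.cast_nonneg n) (by simp only [γ]; linarith)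
  have hβ : β ^ 2 ≤ γ ^ 2 := sq_le_sq' (by simp only [β, γ]; linarith) (by simp only [β, γ]; linarith)
  have hσsq := sum_sq_eq_card hσ
  rw [Fintype.card_fin] at hσsq
  have hterm : ∀ i, (β * ∑ j, x j + γ * σ0 i * (σ0 ⬝ᵥ x)) ^ 2
      = β ^ 2 * (∑ j, x j) ^ 2 + 2 * β * γ * (∑ j, x j) * (σ0 ⬝ᵥ x) * σ0 i
        + γ ^ 2 * (σ0 ⬝ᵥ x) ^ 2 * σ0 i ^ 2 := fun i => by ring
  have hsq : euclNorm (of (fun i j => meanEA n pin pout σ0 i j - τ) *ᵥ x) ^ 2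
      = n * (β ^ 2 * (∑ i, x i) ^ 2 + γ ^ 2 * (σ0 ⬝ᵥ x) ^ 2) := by
    rw [euclNorm_sq, meanEA_sub_mulVec hσ]
    change ∑ i, (β * ∑ j, x j + γ * σ0 i * (σ0 ⬝ᵥ x)) ^ 2 = _
    simp only [hterm, sum_add_distrib, ← mul_sum, sum_const, card_univ, Fintype.card_fin,
      nsmul_eq_mul, sum_eq_zero_of_card_filter_eq hσ hbal, hσsq]
    ring
  have hbessel := sq_sum_add_sq_dotProduct_le hσ hbal x
  rw [Fintype.card_fin, ← euclNorm_sq] at hbessel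
  refine (pow_le_pow_iff_left₀ (euclNorm_nonneg _)
    (mul_nonneg hα (euclNorm_nonneg x)) two_ne_zero).mp ?_
  calc euclNorm (of (fun i j => meanEA n pin pout σ0 i j - τ) *ᵥ x) ^ 2
      ≤ n * γ ^ 2 * ((∑ i, x i) ^ 2 + (σ0 ⬝ᵥ x) ^ 2) := by
        rw [hsq]
        have := mul_le_mul_of_nonneg_right hβ (sq_nonneg (∑ i, x i))
        have := Nat.cast_nonneg (α := ℝ) n
        nlinarith
    _ ≤ n * γ ^ 2 * (n * euclNorm x ^ 2) := by gcongr
    _ = (n * γ * euclNorm x) ^ 2 := by ring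

lemma specNorm_meanEA_sub (hn : 0 < n) (hτ₁ : pout ≤ τ) (hτ₂ : τ ≤ pin)
    (hbal : #(univ.filter (σ0 · = 1)) = #(univ.filter (σ0 · = -1))) :
    specNorm (of fun i j => meanEA n pin pout σ0 i j - τ) = n * (pin - pout) / 2 := by
  rw [mul_div_assoc]
  refine specNorm_eq_of_mulVec_eq_smul (mul_nonneg (Nat.cast_nonneg n) (by linarith))
    (euclNorm_meanEA_sub_mulVec_le hσ hτ₁ hτ₂ hbal) (v := σ0) ?_ ?_
  · obtain ⟨i⟩ : Nonempty (Fin n) := ⟨⟨0, hn⟩⟩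
    intro h
    have := congrFun h i
    rcases hσ i with hi | hi <;> simp [hi] at this
  · have hσσ : σ0 ⬝ᵥ σ0 = n := by
      have h := sum_sq_eq_card hσ
      rw [Fintype.card_fin] at h
      simpa only [dotProduct, sq] using h
    rw [meanEA_sub_mulVec hσ, hσσ, sum_eq_zero_of_card_filter_eq hσ hbal]
    ext i
    simp only [Pi.smul_apply, smul_eq_mul]
    ring

end MeanField

lemma card_filter_filter_ne_zero {ι : Type*} [Fintype ι] [DecidableEq ι] {σ S : ι → ℝ}
    (hS : ∀ i, S i = σ i ∨ S i = -σ i ∨ S i = 0) {c : ℝ} (hc : c ≠ 0) :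
    #((univ.filter (σ · = c)).filter (S · ≠ 0))
      = #(univ.filter fun i => σ i = c ∧ S i = -c) + #(univ.filter fun i => σ i = c ∧ S i = c) := by
  rw [filter_filter, ← card_union_of_disjoint]
  · congr 1
    ext i
    simp only [mem_filter, mem_univ, true_and, mem_union]
    constructor
    · rintro ⟨hσi, hSi⟩
      rcases hS i with h | h | h <;> simp_all
    · rintro (⟨hσi, hSi⟩ | ⟨hσi, hSi⟩) <;> simp [hσi, hSi, hc]
  · refine disjoint_filter.mpr fun i _ h1 h2 => hc ?_
    linarith [h1.2, h2.2]

lemma dotProduct_labelProj_mulVec {n : ℕ} (S x : Fin n → ℝ) :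
    x ⬝ᵥ (labelProj n S *ᵥ x) = ∑ i, if S i ≠ 0 then x i ^ 2 else 0 := by
  simp only [labelProj, mulVec_diagonal, dotProduct, ite_not]
  exact sum_congr rfl fun i _ => by split_ifs <;> ring

lemma dotProduct_meanLtilde_mulVec {n : ℕ} (pin pout τ lam : ℝ) (σ0 S x : Fin n → ℝ) :
    x ⬝ᵥ (meanLtilde n pin pout τ lam σ0 S *ᵥ x)
      = n * (pin - pout) / 2 * euclNorm x ^ 2
        - x ⬝ᵥ (of (fun i j => meanEA n pin pout σ0 i j - τ) *ᵥ x)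
        + lam * x ⬝ᵥ (labelProj n S *ᵥ x) := by
  rw [meanLtilde, add_mulVec, sub_mulVec, smul_mulVec, smul_mulVec, one_mulVec,
    dotProduct_add, dotProduct_sub, dotProduct_smul, dotProduct_smul, euclNorm_sq]
  simp only [smul_eq_mul, dotProduct, sq]

lemma smallRoot_mul_euclNorm_sq_le_dotProduct_meanLtilde_mulVec {n : ℕ} (hn : 0 < n)
    {pin pout τ lam ρ : ℝ} {σ0 S : Fin n → ℝ} (hσ : ∀ i, σ0 i = 1 ∨ σ0 i = -1)
    (hp : pout < pin) (hτ : pout ≤ τ) (hlam : 0 < lam) (hρ₀ : 0 < ρ) (hρ₁ : ρ < 1)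
    (hbal : #(univ.filter (σ0 · = 1)) = #(univ.filter (σ0 · = -1)))
    (hL₁ : (#((univ.filter (σ0 · = 1)).filter (S · ≠ 0)) : ℝ) = ρ * #(univ.filter (σ0 · = 1)))
    (hL₂ : (#((univ.filter (σ0 · = -1)).filter (S · ≠ 0)) : ℝ)
      = ρ * #(univ.filter (σ0 · = -1)))
    (x : Fin n → ℝ) :
    smallRoot (n * (pin - pout) / 2) lam ρ * euclNorm x ^ 2
      ≤ x ⬝ᵥ (meanLtilde n pin pout τ lam σ0 S *ᵥ x) := by
  set C₁ := univ.filter (σ0 · = 1)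
  set C₂ := univ.filter (σ0 · = -1)
  set α := (n : ℝ) * (pin - pout) / 2
  set μ := smallRoot α lam ρ
  have hN : (n : ℝ) = 2 * #C₁ := by
    have h := congrArg (Nat.cast (R := ℝ)) (card_filter_add_card_filter hσ)
    rw [Nat.cast_add, Fintype.card_fin] at h
    rw [← h, two_mul, hbal]
  have hα : 0 < α := by simp only [α]; have := sub_pos.mpr hp; positivity
  have hα₁ : α = #C₁ * (pin - pout) := by simp only [α]; rw [hN]; ring
  have hα₂ : α = #C₂ * (pin - pout) := by rw [hα₁, hbal]
  have hclus₁ := mul_sq_sum_le_of_smallRoot C₁ (S · ≠ 0) hα hα₁ hlam hρ₀ hρ₁ hL₁ x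
  have hclus₂ := mul_sq_sum_le_of_smallRoot C₂ (S · ≠ 0) hα hα₂ hlam hρ₀ hρ₁ hL₂ x
  have hEA : x ⬝ᵥ (of (fun i j => meanEA n pin pout σ0 i j - τ) *ᵥ x)
      ≤ (pin - pout) * ((∑ i ∈ C₁, x i) ^ 2 + (∑ i ∈ C₂, x i) ^ 2) := by
    rw [dotProduct_meanEA_sub_mulVec hσ]
    calc _ ≤ (pin - pout) / 2 * ((∑ i, x i) ^ 2 + (σ0 ⬝ᵥ x) ^ 2) := by
          nlinarith [sq_nonneg (∑ i, x i)]
      _ = _ := by rw [sq_sum_add_sq_dotProduct hσ]; ring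
  have hnorm : euclNorm x ^ 2 = ∑ i ∈ C₁, x i ^ 2 + ∑ i ∈ C₂, x i ^ 2 := by
    rw [euclNorm_sq, sum_eq_sum_filter_add_sum_filter hσ]
  have hlabel : x ⬝ᵥ (labelProj n S *ᵥ x)
      = ∑ i ∈ C₁.filter (S · ≠ 0), x i ^ 2 + ∑ i ∈ C₂.filter (S · ≠ 0), x i ^ 2 := by
    rw [dotProduct_labelProj_mulVec, sum_eq_sum_filter_add_sum_filter hσ, ← sum_filter, ← sum_filter]
  rw [dotProduct_meanLtilde_mulVec, show (n : ℝ) * (pin - pout) / 2 = α from rfl, hlabel, hnorm]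
  linarith

lemma specNorm_meanLtilde_sub_empLtilde_le {n : ℕ} (hn : 0 < n) {pin pout τ : ℝ}
    {σ0 : Fin n → ℝ} (hσ : ∀ i, σ0 i = 1 ∨ σ0 i = -1) (hτ₁ : pout ≤ τ) (hτ₂ : τ ≤ pin)
    (hbal : #(univ.filter (σ0 · = 1)) = #(univ.filter (σ0 · = -1)))
    (lam : ℝ) (A : Matrix (Fin n) (Fin n) ℝ) (S : Fin n → ℝ) :
    specNorm (meanLtilde n pin pout τ lam σ0 S - empLtilde n τ lam A S)
      ≤ 2 * specNorm (A - meanEA n pin pout σ0) := by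
  have hEL : meanLtilde n pin pout τ lam σ0 S
      = specNorm (of fun i j => meanEA n pin pout σ0 i j - τ) • 1
        - (of fun i j => meanEA n pin pout σ0 i j - τ) + lam • labelProj n S := by
    rw [specNorm_meanEA_sub hσ hn hτ₁ hτ₂ hbal]; rfl
  have hdiff : (of fun i j => A i j - τ) - (of fun i j => meanEA n pin pout σ0 i j - τ)
      = A - meanEA n pin pout σ0 := by
    ext i j; simp
  exact hEL ▸ hdiff ▸ specNorm_sub_le_two_mul _ _ _

lemma cast_add_eq_mul_half_and_pos_and_lt_one {n k m : ℕ} (hev : Even n) (hkm1 : 1 ≤ k + m)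
    (hkm2 : k + m ≤ n / 2 - 1) :
    ((k + m : ℕ) : ℝ) = (2 * k / n + 2 * m / n) * (n / 2 : ℕ) ∧
      0 < 2 * (k : ℝ) / n + 2 * m / n ∧ 2 * (k : ℝ) / n + 2 * m / n < 1 := by
  have hn : (n : ℝ) ≠ 0 := by norm_cast; omega
  have hρ : ((k + m : ℕ) : ℝ) = (2 * k / n + 2 * m / n) * (n / 2 : ℕ) := by
    rw [Nat.cast_div (even_iff_two_dvd.mp hev) two_ne_zero]
    field_simp
    push_cast; ring
  have hhalf : (0 : ℝ) < (n / 2 : ℕ) := by exact_mod_cast (by omega : 0 < n / 2)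
  have hlt : ((k + m : ℕ) : ℝ) < (n / 2 : ℕ) := by exact_mod_cast (by omega : k + m < n / 2)
  refine ⟨hρ, pos_of_mul_pos_left (hρ ▸ Nat.cast_pos.mpr hkm1) hhalf.le, ?_⟩
  nlinarith

theorem concentration_around_mean_field_general
    (n : ℕ) (hn : 0 < n) (hev : Even n) (pin pout : ℝ)
    (hp : pout < pin)
    (k m : ℕ) (hkm1 : 1 ≤ k + m) (hkm2 : k + m ≤ n / 2 - 1)
    (σ0 S : Fin n → ℝ)
    (hσ : ∀ i, σ0 i = 1 ∨ σ0 i = -1)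
    (hbal : (Finset.univ.filter (fun i => σ0 i = 1)).card = n / 2)
    (hSval : ∀ i, S i = σ0 i ∨ S i = -σ0 i ∨ S i = 0)
    (hk1 : (Finset.univ.filter (fun i => σ0 i = 1 ∧ S i = -1)).card = k)
    (hk2 : (Finset.univ.filter (fun i => σ0 i = -1 ∧ S i = 1)).card = k)
    (hm1 : (Finset.univ.filter (fun i => σ0 i = 1 ∧ S i = 1)).card = m)
    (hm2 : (Finset.univ.filter (fun i => σ0 i = -1 ∧ S i = -1)).card = m)
    (τ lam : ℝ) (hlam : 0 < lam) (hτ1 : pout ≤ τ) (hτ2 : τ ≤ pin)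
    (c0 : ℝ)
    (A : Matrix (Fin n) (Fin n) ℝ)
    (hA : specNorm (A - meanEA n pin pout σ0)
      ≤ c0 * Real.sqrt ((n : ℝ) * (pin + pout) / 2))
    (hinv : IsUnit (empLtilde n τ lam A S).det) :
    euclNorm (lam • ((empLtilde n τ lam A S)⁻¹ *ᵥ S)
        - lam • ((meanLtilde n pin pout τ lam σ0 S)⁻¹ *ᵥ S))
      ≤ (4 * c0 * Real.sqrt ((n : ℝ) * (pin + pout) / 2)
          / (((n : ℝ) * (pin - pout) / 2 + lam)
            * (1 - Real.sqrt (1 -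
                4 * (2 * (k : ℝ) / (n : ℝ) + 2 * (m : ℝ) / (n : ℝ))
                  * lam * ((n : ℝ) * (pin - pout) / 2)
                  / (lam + (n : ℝ) * (pin - pout) / 2) ^ 2))))
        * euclNorm (lam • ((empLtilde n τ lam A S)⁻¹ *ᵥ S)) := by
  set α := (n : ℝ) * (pin - pout) / 2
  set ρ := 2 * (k : ℝ) / n + 2 * (m : ℝ) / n
  have hC₂ : #(univ.filter (σ0 · = -1)) = n / 2 := by
    have := Fintype.card_fin n ▸ card_filter_add_card_filter hσ
    have := Nat.even_iff.mp hev
    omega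
  have hL₁ : #((univ.filter (σ0 · = 1)).filter (S · ≠ 0)) = k + m := by
    rw [card_filter_filter_ne_zero hSval one_ne_zero, hk1, hm1]
  have hL₂ : #((univ.filter (σ0 · = -1)).filter (S · ≠ 0)) = k + m := by
    rw [card_filter_filter_ne_zero hSval (neg_ne_zero.mpr one_ne_zero), neg_neg, hk2, hm2]
  obtain ⟨hρ, hρ₀, hρ₁⟩ := cast_add_eq_mul_half_and_pos_and_lt_one hev hkm1 hkm2
  have hcoer := smallRoot_mul_euclNorm_sq_le_dotProduct_meanLtilde_mulVec hn hσ hp hτ1 hlam hρ₀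
    hρ₁ (hbal.trans hC₂.symm) (by rw [hL₁, hbal, hρ]) (by rw [hL₂, hC₂, hρ]) (S := S)
  have hμ : 0 < smallRoot α lam ρ := smallRoot_pos (by positivity) hlam hρ₀
  have hpert := specNorm_meanLtilde_sub_empLtilde_le hn hσ hτ1 hτ2 (hbal.trans hC₂.symm) lam A S
  have hdiff := mul_euclNorm_inv_mulVec_sub_le hcoer hμ hinv (lam • S)
  rw [mulVec_smul, mulVec_smul] at hdiff
  have h2μ : (α + lam) * (1 - √(1 - 4 * ρ * lam * α / (lam + α) ^ 2)) = 2 * smallRoot α lam ρ := by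
    rw [smallRoot]; ring
  have hbound := hdiff.trans (mul_le_mul_of_nonneg_right
    (show _ ≤ 2 * (c0 * √(n * (pin + pout) / 2)) by linarith) (euclNorm_nonneg _))
  rw [h2μ, div_mul_eq_mul_div, le_div_iff₀ (by positivity)]
  linarith

/-- **Theorem 2 (concentration around the mean field).** In the mean-field setting
with `λ > 0` and `p_out ≤ τ ≤ p_in`, if `‖A − EA‖₂ ≤ c₀√d` and `L̃ = α·I − A_τ + λ·P_L`
is invertible, then the solutions `X = λL̃⁻¹S` and `X^MF = λEL̃⁻¹S` satisfy
`‖X − X^MF‖₂ ≤ (4c₀√d / ((α^MF+λ)(1 − √(1 − 4(θ+η)λα^MF/(λ+α^MF)²))))·‖X‖₂`. -/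
theorem concentration_around_mean_field
    (n : ℕ) (hn : 0 < n) (hev : Even n) (pin pout : ℝ)
    (hpout : 0 < pout) (hp : pout < pin) (hpin : pin < 1)
    (k m : ℕ) (hkm1 : 1 ≤ k + m) (hkm2 : k + m ≤ n / 2 - 1)
    (σ0 S : Fin n → ℝ)
    (hσ : ∀ i, σ0 i = 1 ∨ σ0 i = -1)
    (hbal : (Finset.univ.filter (fun i => σ0 i = 1)).card = n / 2)
    (hSval : ∀ i, S i = σ0 i ∨ S i = -σ0 i ∨ S i = 0)
    (hk1 : (Finset.univ.filter (fun i => σ0 i = 1 ∧ S i = -1)).card = k)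
    (hk2 : (Finset.univ.filter (fun i => σ0 i = -1 ∧ S i = 1)).card = k)
    (hm1 : (Finset.univ.filter (fun i => σ0 i = 1 ∧ S i = 1)).card = m)
    (hm2 : (Finset.univ.filter (fun i => σ0 i = -1 ∧ S i = -1)).card = m)
    (τ lam : ℝ) (hlam : 0 < lam) (hτ1 : pout ≤ τ) (hτ2 : τ ≤ pin)
    (c0 : ℝ) (hc0 : 0 < c0)
    (A : Matrix (Fin n) (Fin n) ℝ) (hAsym : A.IsSymm)
    (hA : specNorm (A - meanEA n pin pout σ0)
      ≤ c0 * Real.sqrt ((n : ℝ) * (pin + pout) / 2))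
    (hinv : IsUnit (empLtilde n τ lam A S).det) :
    euclNorm (lam • ((empLtilde n τ lam A S)⁻¹ *ᵥ S)
        - lam • ((meanLtilde n pin pout τ lam σ0 S)⁻¹ *ᵥ S))
      ≤ (4 * c0 * Real.sqrt ((n : ℝ) * (pin + pout) / 2)
          / (((n : ℝ) * (pin - pout) / 2 + lam)
            * (1 - Real.sqrt (1 -
                4 * (2 * (k : ℝ) / (n : ℝ) + 2 * (m : ℝ) / (n : ℝ))
                  * lam * ((n : ℝ) * (pin - pout) / 2)
                  / (lam + (n : ℝ) * (pin - pout) / 2) ^ 2))))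
        * euclNorm (lam • ((empLtilde n τ lam A S)⁻¹ *ᵥ S)) :=
  concentration_around_mean_field_general n hn hev pin pout hp k m hkm1 hkm2 σ0 S hσ hbal hSval hk1
    hk2 hm1 hm2 τ lam hlam hτ1 hτ2 c0 A hA hinv

end
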